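/- arXiv:2404.11416 — 5 statements merged into one kernel-verified Lean document; each statement's English description precedes it below -/
import Mathlib

section
/- Let a, s, ĥ be positive reals, set S := s + a and Ĥ := ĥ + a, and let x₀, y_N ∈ ℝ. Then binding the Gaussian measure gaussianReal ((ĥ·x₀ + S·y_N)/(ĥ+S)) (S·ĥ/(ĥ+S)) with the kernel z ↦ gaussianReal ((a·x₀ + s·z)/(a+s)) (a·s/(a+s)) yields the Gaussian measure gaussianReal ((Ĥ·x₀ + s·y_N)/(Ĥ+s)) (s·Ĥ/(Ĥ+s)). -/
open MeasureTheory ProbabilityTheory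
open scoped NNReal

open Real

lemma integrable_rexp_quadratic {b : ℝ} (hb : 0 < b) (c d : ℝ) :
    Integrable fun x : ℝ => rexp (-b * x ^ 2 + c * x + d) := by
  have : (fun x : ℝ => rexp (-b * x ^ 2 + c * x + d))
      = fun x : ℝ => (Complex.exp (-(b:ℂ) * x ^ 2 + c * x + d)).re := by
    funext x
    rw [show (-(b:ℂ) * x ^ 2 + c * x + d) = ((-b * x ^ 2 + c * x + d : ℝ) : ℂ) by push_cast; ring,
      ← Complex.ofReal_exp, Complex.ofReal_re]
  rw [this]
  exact (integrable_cexp_quadratic (by simpa using hb) _ _).re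

lemma integral_rexp_quadratic {b : ℝ} (hb : 0 < b) (c d : ℝ) :
    ∫ x : ℝ, rexp (-b * x ^ 2 + c * x + d) = Real.sqrt (π / b) * rexp (d + c ^ 2 / (4 * b)) := by
  have h := integral_cexp_quadratic (b := -(b:ℂ)) (by simpa using hb) (c : ℂ) (d : ℂ)
  have h1 : ∫ x : ℝ, Complex.exp (-(b:ℂ) * x ^ 2 + c * x + d)
      = ((∫ x : ℝ, rexp (-b * x ^ 2 + c * x + d) : ℝ) : ℂ) := by
    refine (integral_congr_ae (Filter.Eventually.of_forall fun x => ?_)).trans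
      (integral_ofReal (f := fun x : ℝ => rexp (-b * x ^ 2 + c * x + d)))
    show Complex.exp _ = ((rexp (-b * x ^ 2 + c * x + d) : ℝ) : ℂ)
    rw [show (-(b:ℂ) * x ^ 2 + c * x + d) = ((-b * x ^ 2 + c * x + d : ℝ) : ℂ) by push_cast; ring,
      ← Complex.ofReal_exp]
  rw [h1] at h
  have h2 : ((π : ℂ) / -(-(b:ℂ))) ^ (1 / 2 : ℂ) = ((Real.sqrt (π / b) : ℝ) : ℂ) := by
    rw [neg_neg]
    rw [show ((π : ℂ) / (b:ℂ)) = ((π / b : ℝ) : ℂ) by push_cast; ring,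
      show (1/2 : ℂ) = ((1/2 : ℝ) : ℂ) by norm_num,
      ← Complex.ofReal_cpow (by positivity), Real.sqrt_eq_rpow]
  have h3 : Complex.exp ((d:ℂ) - (c:ℂ) ^ 2 / (4 * -(b:ℂ))) = ((rexp (d + c ^ 2 / (4 * b)) : ℝ) : ℂ) := by
    rw [show ((d:ℂ) - (c:ℂ) ^ 2 / (4 * -(b:ℂ))) = ((d + c ^ 2 / (4 * b) : ℝ) : ℂ) by
      push_cast; field_simp; ring, ← Complex.ofReal_exp]
  rw [h2, h3, ← Complex.ofReal_mul] at h
  exact_mod_cast h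

section conv
variable (μ₀ : ℝ) (v₀ v : ℝ≥0) (c m x : ℝ)

lemma gauss_key (h₀ : v₀ ≠ 0) (hv : v ≠ 0) (z : ℝ) :
    gaussianPDFReal μ₀ v₀ z * gaussianPDFReal (c * z + m) v x
      = ((√(2*π*(v₀:ℝ)))⁻¹ * (√(2*π*(v:ℝ)))⁻¹) *
        rexp (-(1/(2*(v₀:ℝ)) + c^2/(2*(v:ℝ))) * z^2 + ((μ₀:ℝ)/(v₀:ℝ) + c*(x-m)/(v:ℝ)) * z
          + (-(μ₀^2/(2*(v₀:ℝ))) - (x-m)^2/(2*(v:ℝ)))) := by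
  have hV₀ : (0:ℝ) < v₀ := lt_of_le_of_ne v₀.coe_nonneg (by exact_mod_cast (Ne.symm h₀))
  have hV : (0:ℝ) < v := lt_of_le_of_ne v.coe_nonneg (by exact_mod_cast (Ne.symm hv))
  simp only [gaussianPDFReal]
  rw [show ((√(2*π*(v₀:ℝ)))⁻¹ * rexp (-(z-μ₀)^2/(2*(v₀:ℝ)))) *
      ((√(2*π*(v:ℝ)))⁻¹ * rexp (-(x-(c*z+m))^2/(2*(v:ℝ))))
    = ((√(2*π*(v₀:ℝ)))⁻¹ * (√(2*π*(v:ℝ)))⁻¹) *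
      (rexp (-(z-μ₀)^2/(2*(v₀:ℝ))) * rexp (-(x-(c*z+m))^2/(2*(v:ℝ)))) by ring,
    ← Real.exp_add]
  congr 2
  field_simp
  ring

lemma gauss_conv_integrable (h₀ : v₀ ≠ 0) (hv : v ≠ 0) :
    Integrable fun z => gaussianPDFReal μ₀ v₀ z * gaussianPDFReal (c * z + m) v x := by
  have hV₀ : (0:ℝ) < v₀ := lt_of_le_of_ne v₀.coe_nonneg (by exact_mod_cast (Ne.symm h₀))
  have hV : (0:ℝ) < v := lt_of_le_of_ne v.coe_nonneg (by exact_mod_cast (Ne.symm hv))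
  simp only [gauss_key μ₀ v₀ v c m x h₀ hv]
  exact (integrable_rexp_quadratic (by positivity) _ _).const_mul _

lemma gauss_conv_pdf (h₀ : v₀ ≠ 0) (hv : v ≠ 0) :
    ∫ z, gaussianPDFReal μ₀ v₀ z * gaussianPDFReal (c * z + m) v x
      = gaussianPDFReal (c * μ₀ + m) (⟨c ^ 2, sq_nonneg c⟩ * v₀ + v) x := by
  have hV₀ : (0:ℝ) < v₀ := lt_of_le_of_ne v₀.coe_nonneg (by exact_mod_cast (Ne.symm h₀))
  have hV : (0:ℝ) < v := lt_of_le_of_ne v.coe_nonneg (by exact_mod_cast (Ne.symm hv))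
  set W : ℝ := c^2 * (v₀:ℝ) + (v:ℝ) with hWdef
  have hW : (0:ℝ) < W := by positivity
  have hcoe : ((⟨c ^ 2, sq_nonneg c⟩ * v₀ + v : ℝ≥0) : ℝ) = W := by
    push_cast; rfl
  simp only [gauss_key μ₀ v₀ v c m x h₀ hv]
  rw [MeasureTheory.integral_const_mul, integral_rexp_quadratic (by positivity), gaussianPDFReal,
    hcoe, ← mul_assoc]
  have hb : (1/(2*(v₀:ℝ)) + c^2/(2*(v:ℝ))) = W / (2*(v₀:ℝ)*(v:ℝ)) := by
    field_simp; ring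
  have hK : (√(2*π*(v₀:ℝ)))⁻¹ * (√(2*π*(v:ℝ)))⁻¹ * √(π / (1/(2*(v₀:ℝ)) + c^2/(2*(v:ℝ))))
      = (√(2*π*W))⁻¹ := by
    rw [hb, show π / (W / (2*(v₀:ℝ)*(v:ℝ))) = 2*π*(v₀:ℝ)*(v:ℝ)/W by field_simp]
    have harg : (2*π*(v₀:ℝ))⁻¹ * ((2*π*(v:ℝ))⁻¹ * (2*π*(v₀:ℝ)*(v:ℝ)/W)) = (2*π*W)⁻¹ := by
      field_simp
    calc (√(2*π*(v₀:ℝ)))⁻¹ * (√(2*π*(v:ℝ)))⁻¹ * √(2*π*(v₀:ℝ)*(v:ℝ)/W)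
        = √((2*π*(v₀:ℝ))⁻¹) * (√((2*π*(v:ℝ))⁻¹) * √(2*π*(v₀:ℝ)*(v:ℝ)/W)) := by
          rw [Real.sqrt_inv, Real.sqrt_inv]; ring
      _ = √((2*π*(v₀:ℝ))⁻¹ * ((2*π*(v:ℝ))⁻¹ * (2*π*(v₀:ℝ)*(v:ℝ)/W))) := by
          rw [← Real.sqrt_mul (by positivity), ← Real.sqrt_mul (by positivity)]
      _ = √((2*π*W)⁻¹) := by rw [harg]
      _ = (√(2*π*W))⁻¹ := Real.sqrt_inv _
  have hE : (-(μ₀^2/(2*(v₀:ℝ))) - (x-m)^2/(2*(v:ℝ)))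
        + ((μ₀:ℝ)/(v₀:ℝ) + c*(x-m)/(v:ℝ))^2 / (4 * (1/(2*(v₀:ℝ)) + c^2/(2*(v:ℝ))))
      = -(x-(c*μ₀+m))^2/(2*W) := by
    rw [hb]
    field_simp
    ring
  rw [hK, hE]

lemma measurable_gauss_kernel (v : ℝ≥0) (hv : v ≠ 0) (c m : ℝ) {t : Set ℝ}
    (ht : MeasurableSet t) :
    Measurable fun z : ℝ => ∫⁻ x in t, gaussianPDF (c * z + m) v x := by
  refine Measurable.lintegral_prod_right' (f := fun p : ℝ × ℝ => gaussianPDF (c * p.1 + m) v p.2) ?_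
  simp only [gaussianPDF, gaussianPDFReal]
  refine Measurable.ennreal_ofReal ?_
  fun_prop

lemma gaussianReal_bind_gaussianReal (μ₀ : ℝ) (v₀ v : ℝ≥0) (h₀ : v₀ ≠ 0) (hv : v ≠ 0)
    (c m : ℝ) :
    (gaussianReal μ₀ v₀).bind (fun z => gaussianReal (c * z + m) v)
      = gaussianReal (c * μ₀ + m) (⟨c ^ 2, sq_nonneg c⟩ * v₀ + v) := by
  have hW : (⟨c ^ 2, sq_nonneg c⟩ * v₀ + v : ℝ≥0) ≠ 0 := by
    intro h
    exact hv (by simpa using (add_eq_zero.mp h).2)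
  have hκ : Measurable fun z : ℝ => gaussianReal (c * z + m) v := by
    refine Measure.measurable_of_measurable_coe _ fun t ht => ?_
    simp_rw [gaussianReal_apply _ hv t]
    exact measurable_gauss_kernel v hv c m ht
  ext t ht
  rw [Measure.bind_apply ht hκ.aemeasurable]
  simp_rw [gaussianReal_apply _ hv t]
  rw [gaussianReal_of_var_ne_zero _ h₀,
    lintegral_withDensity_eq_lintegral_mul volume (measurable_gaussianPDF _ _)
      (measurable_gauss_kernel v hv c m ht)]
  simp only [Pi.mul_apply]
  have hswap : ∫⁻ z, gaussianPDF μ₀ v₀ z * ∫⁻ x in t, gaussianPDF (c * z + m) v x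
      = ∫⁻ x in t, ∫⁻ z, gaussianPDF μ₀ v₀ z * gaussianPDF (c * z + m) v x := by
    rw [lintegral_congr fun z =>
      (lintegral_const_mul (gaussianPDF μ₀ v₀ z) (measurable_gaussianPDF _ _)).symm]
    refine lintegral_lintegral_swap ?_
    apply Measurable.aemeasurable
    refine Measurable.mul (f := fun p : ℝ × ℝ => gaussianPDF μ₀ v₀ p.1)
      (g := fun p : ℝ × ℝ => gaussianPDF (c * p.1 + m) v p.2) ?_ ?_
    · exact (measurable_gaussianPDF _ _).comp measurable_fst
    · simp only [gaussianPDF, gaussianPDFReal]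
      refine Measurable.ennreal_ofReal ?_
      fun_prop
  rw [hswap]
  rw [(gaussianReal_apply _ hW t :)]
  refine lintegral_congr fun x => ?_
  simp_rw [gaussianPDF, ← ENNReal.ofReal_mul (gaussianPDFReal_nonneg _ _ _)]
  rw [← ofReal_integral_eq_lintegral_ofReal (gauss_conv_integrable μ₀ v₀ v c m x h₀ hv)
    (Filter.Eventually.of_forall fun z =>
      mul_nonneg (gaussianPDFReal_nonneg _ _ _) (gaussianPDFReal_nonneg _ _ _)),
    gauss_conv_pdf μ₀ v₀ v c m x h₀ hv]
end conv

/-- Measure-level induction step for the analytic posterior of the Schrödinger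
bridge: binding the `(n+1)`-step posterior Gaussian (mean
`(ĥ·x₀ + S·y_N)/(ĥ+S)`, variance `S·ĥ/(ĥ+S)`, with `ĥ = hhat`, `S = s + a`)
with the one-step posterior kernel `z ↦ N((a·x₀ + s·z)/(a+s), a·s/(a+s))`
yields the `n`-step posterior Gaussian (mean `(Ĥ·x₀ + s·y_N)/(Ĥ+s)`,
variance `s·Ĥ/(Ĥ+s)`, with `Ĥ = Hhat = hhat + a`). -/
theorem stmt5 (a s hhat : ℝ) (ha : 0 < a) (hs : 0 < s) (hhhat : 0 < hhat)
    (S Hhat : ℝ) (hS : S = s + a) (hHhat : Hhat = hhat + a) (x₀ yN : ℝ) :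
    (gaussianReal ((hhat * x₀ + S * yN) / (hhat + S)) ((S * hhat / (hhat + S)).toNNReal)).bind
        (fun z => gaussianReal ((a * x₀ + s * z) / (a + s)) ((a * s / (a + s)).toNNReal))
      = gaussianReal ((Hhat * x₀ + s * yN) / (Hhat + s)) ((s * Hhat / (Hhat + s)).toNNReal) := by
  subst hS hHhat
  have has : (0:ℝ) < a + s := by linarith
  have h₀ : ((s + a) * hhat / (hhat + (s + a))).toNNReal ≠ 0 :=
    ne_of_gt (Real.toNNReal_pos.mpr (by positivity))
  have hv : (a * s / (a + s)).toNNReal ≠ 0 :=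
    ne_of_gt (Real.toNNReal_pos.mpr (by positivity))
  have hker : (fun z : ℝ => gaussianReal ((a * x₀ + s * z) / (a + s))
        ((a * s / (a + s)).toNNReal))
      = fun z => gaussianReal ((s / (a + s)) * z + a * x₀ / (a + s))
        ((a * s / (a + s)).toNNReal) := by
    funext z
    congr 1
    field_simp
    ring
  rw [hker, gaussianReal_bind_gaussianReal _ _ _ h₀ hv (s / (a + s)) (a * x₀ / (a + s))]
  congr 1
  · field_simp
    ring
  · refine NNReal.coe_injective ?_
    push_cast
    show (s / (a + s)) ^ 2 * (((s + a) * hhat / (hhat + (s + a))).toNNReal : ℝ)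
      + ((a * s / (a + s)).toNNReal : ℝ) = ((s * (hhat + a) / (hhat + a + s)).toNNReal : ℝ)
    rw [Real.coe_toNNReal _ (by positivity), Real.coe_toNNReal _ (by positivity),
      Real.coe_toNNReal _ (by positivity)]
    field_simp
    ring
end

section
/- Let d ≥ 1, E = EuclideanSpace ℝ (Fin d), and let β : ℝ → ℝ be continuous with β(t) > 0 for all t ∈ [0,1]. Define σ²(t) := ∫_0^t β(τ) dτ, s := ∫_0^1 β(τ) dτ, and σ̂²(t) := s − σ²(t). For x₀, y₁ ∈ E define the curve Y : ℝ → E by Y(t) := (σ̂²(t)/s) • x₀ + (σ²(t)/s) • y₁. Then for every t ∈ (0,1], Y is differentiable at t with derivative (β(t)/σ²(t)) • (Y(t) − x₀); that is, Y solves the SB ODE dY_t = v_t(Y_t|X₀) dt with velocity field v_t(Y_t|X₀) = (β_t/σ_t²)(Y_t − X₀). -/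
open MeasureTheory intervalIntegral

/-- The SB ODE interpolation curve
`Y t = (σ̂²(t)/s) • x₀ + (σ²(t)/s) • y₁`, where `σ²(t) = ∫_0^t β`,
`s = ∫_0^1 β` and `σ̂²(t) = s − σ²(t)`, solves the SB ODE
`dY_t = (β_t/σ_t²)(Y_t − x₀) dt` on `(0,1]`. -/
theorem stmt6 (d : ℕ) (hd : 1 ≤ d) (β : ℝ → ℝ) (hβc : Continuous β)
    (hβpos : ∀ t ∈ Set.Icc (0:ℝ) 1, 0 < β t)
    (x₀ y₁ : EuclideanSpace ℝ (Fin d))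
    (σsq : ℝ → ℝ) (hσsq : σsq = fun t => ∫ τ in (0:ℝ)..t, β τ)
    (s : ℝ) (hs : s = ∫ τ in (0:ℝ)..1, β τ)
    (σhatsq : ℝ → ℝ) (hσhatsq : σhatsq = fun t => s - σsq t)
    (Y : ℝ → EuclideanSpace ℝ (Fin d))
    (hY : Y = fun t => (σhatsq t / s) • x₀ + (σsq t / s) • y₁) :
    ∀ t ∈ Set.Ioc (0:ℝ) 1, HasDerivAt Y ((β t / σsq t) • (Y t - x₀)) t := by
  intro t ht
  have hσpos : ∀ u ∈ Set.Ioc (0:ℝ) 1, 0 < σsq u := by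
    intro u hu
    rw [hσsq]
    apply intervalIntegral.intervalIntegral_pos_of_pos_on
      (hβc.intervalIntegrable 0 u)
      (fun x hx => hβpos x ⟨le_of_lt hx.1, le_trans (le_of_lt hx.2) hu.2⟩) hu.1
  have hspos : 0 < s := by
    rw [hs]
    exact intervalIntegral.intervalIntegral_pos_of_pos_on
      (hβc.intervalIntegrable 0 1)
      (fun x hx => hβpos x ⟨le_of_lt hx.1, le_of_lt hx.2⟩) one_pos
  have hsne : s ≠ 0 := ne_of_gt hspos
  have hσt : 0 < σsq t := hσpos t ht
  have hσder : HasDerivAt σsq (β t) t := by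
    rw [hσsq]
    exact intervalIntegral.integral_hasDerivAt_right (hβc.intervalIntegrable 0 t)
      (hβc.stronglyMeasurableAtFilter _ _) hβc.continuousAt
  have h1 : HasDerivAt (fun u => (σhatsq u / s) • x₀) ((-β t / s) • x₀) t := by
    have : HasDerivAt (fun u => σhatsq u / s) (-β t / s) t := by
      rw [hσhatsq]
      simpa using ((hasDerivAt_const t s).sub hσder).div_const s
    exact this.smul_const x₀
  have h2 : HasDerivAt (fun u => (σsq u / s) • y₁) ((β t / s) • y₁) t :=
    (hσder.div_const s).smul_const y₁
  have hder : HasDerivAt Y ((-β t / s) • x₀ + (β t / s) • y₁) t := by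
    rw [hY]; exact h1.add h2
  convert hder using 1
  rw [hY, hσhatsq]
  have : ((s - σsq t) / s) • x₀ + (σsq t / s) • y₁ - x₀
      = (σsq t / s) • (y₁ - x₀) := by
    have hss : (s - σsq t) / s = 1 - σsq t / s := by field_simp
    rw [hss]
    rw [smul_sub, sub_smul, one_smul]
    abel
  simp only [this]
  rw [smul_smul]
  have : β t / σsq t * (σsq t / s) = β t / s := by
    field_simp
  rw [this, smul_sub]
  have : (-(β t) / s) • x₀ = -((β t / s) • x₀) := by
    rw [neg_div, neg_smul]
  rw [this]
  abel
end

section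
/- Let d ≥ 1, E = EuclideanSpace ℝ (Fin d), let β > 0 be a constant, and let x₀, y₁ ∈ E. With σ²(t) := βt (the accumulated variance of the constant schedule), the SB ODE posterior mean becomes μ(t) = (1−t) • x₀ + t • y₁, and for every t ∈ (0,1] the SB ODE velocity satisfies (β/σ²(t)) • (μ(t) − x₀) = (1/t) • (μ(t) − x₀) = y₁ − x₀; moreover the curve t ↦ (1−t) • x₀ + t • y₁ is differentiable at every t ∈ (0,1] with derivative y₁ − x₀, hence solves dY_t = (Y_t − X₀)/t · dt. -/
/-- With a constant noise schedule `β_t ≡ β` (so the accumulated variance is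
`σ²(t) = β·t` and `σ̂²(t) = β − β·t`), the SB ODE posterior mean becomes the
straight-line interpolation `μ(t) = (1−t) • x₀ + t • y₁`, the SB ODE velocity
`(β/σ²(t)) • (μ(t) − x₀)` equals `(1/t) • (μ(t) − x₀) = y₁ − x₀` on `(0,1]`,
and the curve solves `dY_t = (Y_t − X₀)/t dt`: this recovers Flow Matching. -/
theorem stmt7 (d : ℕ) (hd : 1 ≤ d) (β : ℝ) (hβ : 0 < β)
    (x₀ y₁ : EuclideanSpace ℝ (Fin d))
    (σsq : ℝ → ℝ) (hσsq : σsq = fun t => β * t)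
    (μ : ℝ → EuclideanSpace ℝ (Fin d)) (hμ : μ = fun t => (1 - t) • x₀ + t • y₁) :
    ∀ t ∈ Set.Ioc (0:ℝ) 1,
      ((β - σsq t) / β) • x₀ + (σsq t / β) • y₁ = μ t ∧
      (β / σsq t) • (μ t - x₀) = (1 / t) • (μ t - x₀) ∧
      (1 / t) • (μ t - x₀) = y₁ - x₀ ∧
      HasDerivAt μ (y₁ - x₀) t := by
  subst hσsq hμ
  rintro t ⟨ht0, ht1⟩
  have hβ' : β ≠ 0 := ne_of_gt hβ
  have ht : t ≠ 0 := ne_of_gt ht0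
  have hdiff : (fun t : ℝ => (1 - t) • x₀ + t • y₁) t - x₀ = t • (y₁ - x₀) := by
    simp [smul_sub, sub_smul, one_smul]
    abel
  refine ⟨?_, ?_, ?_, ?_⟩
  · congr 1 <;> [congr 1;skip] <;> field_simp <;> ring
  · rw [hdiff, smul_smul, smul_smul]
    congr 1
    field_simp <;> ring
  · rw [hdiff, smul_smul]
    field_simp <;> simp
  · have h1 : HasDerivAt (fun t : ℝ => (1 - t) • x₀) ((-1 : ℝ) • x₀) t := by
      simpa using ((hasDerivAt_id t).const_sub 1).smul_const x₀
    have h2 : HasDerivAt (fun t : ℝ => t • y₁) ((1 : ℝ) • y₁) t :=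
      (hasDerivAt_id t).smul_const y₁
    have := h1.add h2
    exact this.congr_deriv (by module)
end

section
/- Let d ≥ 1, E = EuclideanSpace ℝ (Fin d), and x₀, y₁ ∈ E. Let σ, σ̂ : ℝ → ℝ and β_t ∈ ℝ, and let t ∈ ℝ be such that σ(t) > 0, σ̂(t) > 0, σ has derivative β_t at t, and σ̂ has derivative −β_t at t. Set M_t := 2β_t·σ(t)·σ̂(t)·(σ(t)+σ̂(t))/(σ(t)² + σ̂(t)²)². Then the curve μ(τ) := (σ̂(τ)²/(σ̂(τ)²+σ(τ)²)) • x₀ + (σ(τ)²/(σ̂(τ)²+σ(τ)²)) • y₁ is differentiable at t with derivative M_t • (y₁ − x₀), and consequently ‖y₁ − x₀ − M_t • (y₁ − x₀)‖² = (1 − M_t)²·‖y₁ − x₀‖². -/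
/-- Curvature computation for the SB ODE: the posterior-mean trajectory
`μ(τ) = (σ̂(τ)²/(σ̂(τ)²+σ(τ)²)) • x₀ + (σ(τ)²/(σ̂(τ)²+σ(τ)²)) • y₁`
has derivative `M_t • (y₁ − x₀)` at `t`, where
`M_t = 2β_t·σ_t·σ̂_t·(σ_t+σ̂_t)/(σ_t²+σ̂_t²)²`, so the deviation from a
straight path satisfies `‖y₁ − x₀ − M_t•(y₁−x₀)‖² = (1−M_t)²·‖y₁−x₀‖²`. -/
theorem stmt9 (d : ℕ) (hd : 1 ≤ d) (x₀ y₁ : EuclideanSpace ℝ (Fin d))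
    (σ σhat : ℝ → ℝ) (βt t : ℝ)
    (hσpos : 0 < σ t) (hσhatpos : 0 < σhat t)
    (hdσ : HasDerivAt σ βt t) (hdσhat : HasDerivAt σhat (-βt) t)
    (M : ℝ) (hM : M = 2 * βt * σ t * σhat t * (σ t + σhat t) / (σ t ^ 2 + σhat t ^ 2) ^ 2)
    (μ : ℝ → EuclideanSpace ℝ (Fin d))
    (hμ : μ = fun τ => (σhat τ ^ 2 / (σhat τ ^ 2 + σ τ ^ 2)) • x₀
      + (σ τ ^ 2 / (σhat τ ^ 2 + σ τ ^ 2)) • y₁) :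
    HasDerivAt μ (M • (y₁ - x₀)) t ∧
      ‖y₁ - x₀ - M • (y₁ - x₀)‖ ^ 2 = (1 - M) ^ 2 * ‖y₁ - x₀‖ ^ 2 := by
  have hden : σhat t ^ 2 + σ t ^ 2 ≠ 0 := by positivity
  have hσ2 : HasDerivAt (fun τ => σ τ ^ 2) (2 * σ t * βt) t := by
    simpa [mul_comm, mul_assoc] using hdσ.fun_pow 2
  have hσhat2 : HasDerivAt (fun τ => σhat τ ^ 2) (2 * σhat t * (-βt)) t := by
    simpa [mul_comm, mul_assoc] using hdσhat.fun_pow 2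
  have hsum : HasDerivAt (fun τ => σhat τ ^ 2 + σ τ ^ 2)
      (2 * σhat t * (-βt) + 2 * σ t * βt) t := hσhat2.add hσ2
  have hb : HasDerivAt (fun τ => σ τ ^ 2 / (σhat τ ^ 2 + σ τ ^ 2)) M t := by
    have := hσ2.div hsum hden
    refine this.congr_deriv ?_
    rw [hM]
    field_simp
    ring
  have ha : HasDerivAt (fun τ => σhat τ ^ 2 / (σhat τ ^ 2 + σ τ ^ 2)) (-M) t := by
    have := hσhat2.div hsum hden
    refine this.congr_deriv ?_
    rw [hM]
    field_simp
    ring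
  constructor
  · rw [hμ]
    have := (ha.smul_const x₀).add (hb.smul_const y₁)
    refine this.congr_deriv ?_
    rw [smul_sub, neg_smul]
    abel
  · rw [show y₁ - x₀ - M • (y₁ - x₀) = (1 - M) • (y₁ - x₀) by rw [sub_smul, one_smul]]
    rw [norm_smul, mul_pow, Real.norm_eq_abs, sq_abs]
end

section
/- Let (Ω, F, μ) be a probability space, d ≥ 1, E = EuclideanSpace ℝ (Fin d), and let Z : Ω → E be integrable. Let c : E → ℝ be convex and continuous with c ∘ Z integrable. Let N ≥ 1 and let G₁, …, G_N be sub-σ-algebras of F. Assume the function ω ↦ c((1/N) • ∑_{k=1}^N μ[Z | G_k](ω)) is integrable. Then ∫ c((1/N) • ∑_{k=1}^N μ[Z | G_k](ω)) dμ(ω) ≤ ∫ c(Z(ω)) dμ(ω). -/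
open MeasureTheory


theorem exists_supporting {E : Type*} [NormedAddCommGroup E] [NormedSpace ℝ E]
    {c : E → ℝ} (hconv : ConvexOn ℝ Set.univ c) (hcont : Continuous c) (x₀ : E) :
    ∃ T : E →L[ℝ] ℝ, ∀ x, c x₀ + T (x - x₀) ≤ c x := by
  set s : Set (E × ℝ) := {p | c p.1 < p.2} with hs
  have hopen : IsOpen s := isOpen_lt (hcont.comp continuous_fst) continuous_snd
  have hconvs : Convex ℝ s := by
    intro p hp q hq a b ha hb hab
    simp only [hs, Set.mem_setOf_eq] at hp hq ⊢
    have h1 : c (a • p.1 + b • q.1) ≤ a * c p.1 + b * c q.1 :=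
      hconv.2 (Set.mem_univ _) (Set.mem_univ _) ha hb hab
    have h3 : (a • p + b • q).1 = a • p.1 + b • q.1 := rfl
    have h2 : (a • p + b • q).2 = a * p.2 + b * q.2 := rfl
    rw [h3, h2]
    obtain hpos | hpos : 0 < a ∨ 0 < b := by
      rcases ha.lt_or_eq with h | h
      · exact Or.inl h
      · exact Or.inr (by linarith)
    · nlinarith [mul_lt_mul_of_pos_left hp hpos, mul_le_mul_of_nonneg_left hq.le hb]
    · nlinarith [mul_lt_mul_of_pos_left hq hpos, mul_le_mul_of_nonneg_left hp.le ha]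
  have hx : (x₀, c x₀) ∉ s := by simp [hs]
  obtain ⟨f, hf⟩ := geometric_hahn_banach_open_point hconvs hopen hx
  set r : ℝ := f (0, 1) with hr
  have hsplit : ∀ (x : E) (t : ℝ), f (x, t) = f (x, 0) + t * r := by
    intro x t
    have : (x, t) = (x, (0:ℝ)) + t • ((0:E), (1:ℝ)) := by simp
    rw [this, f.map_add, f.map_smul, smul_eq_mul, hr]
  have hrneg : r < 0 := by
    have h1 := hf (x₀, c x₀ + 1) (by simp [hs])
    rw [hsplit x₀ (c x₀ + 1), hsplit x₀ (c x₀)] at h1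
    linarith
  have key : ∀ x, f (x, 0) + c x * r ≤ f (x₀, 0) + c x₀ * r := by
    intro x
    by_contra h
    push_neg at h
    set ε := (f (x, 0) + c x * r - (f (x₀, 0) + c x₀ * r)) / (2 * (-r)) with hε
    have hεpos : 0 < ε := div_pos (by linarith) (by linarith)
    have hmem : (x, c x + ε) ∈ s := by
      simp only [hs, Set.mem_setOf_eq]; linarith
    have h2 := hf _ hmem
    rw [hsplit x (c x + ε), hsplit x₀ (c x₀)] at h2
    have h2ne : (2 * -r) ≠ 0 := ne_of_gt (by linarith)
    have hΔ : ε * (2 * -r) = f (x, 0) + c x * r - (f (x₀, 0) + c x₀ * r) :=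
      div_mul_cancel₀ _ h2ne
    nlinarith [hΔ, h2, h]
  refine ⟨(-r⁻¹) • (f.comp (ContinuousLinearMap.inl ℝ E ℝ)), fun x => ?_⟩
  have hT : ((-r⁻¹) • (f.comp (ContinuousLinearMap.inl ℝ E ℝ))) (x - x₀)
      = (-r⁻¹) * (f (x, 0) - f (x₀, 0)) := by
    simp only [ContinuousLinearMap.smul_apply, ContinuousLinearMap.comp_apply,
      ContinuousLinearMap.inl_apply, smul_eq_mul]
    rw [show ((x - x₀ : E), (0:ℝ)) = (x, (0:ℝ)) - (x₀, (0:ℝ)) by simp, f.map_sub]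
  rw [hT]
  have hk := key x
  have hrinvneg : r⁻¹ < 0 := inv_lt_zero.mpr hrneg
  have h7 : f (x, 0) - f (x₀, 0) ≤ (c x₀ - c x) * r := by nlinarith [hk]
  have h8 := mul_le_mul_of_nonneg_left h7 (show (0:ℝ) ≤ -r⁻¹ by linarith)
  have h9 : -r⁻¹ * ((c x₀ - c x) * r) = c x - c x₀ := by
    have hrr : r * r⁻¹ = 1 := mul_inv_cancel₀ hrneg.ne
    linear_combination (c x - c x₀) * hrr
  linarith


theorem condexp_clm {Ω : Type*} {m m0 : MeasurableSpace Ω} {μ : Measure Ω} [IsFiniteMeasure μ]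
    (hm : m ≤ m0) {E F : Type*} [NormedAddCommGroup E] [NormedSpace ℝ E] [CompleteSpace E]
    [NormedAddCommGroup F] [NormedSpace ℝ F] [CompleteSpace F]
    {Z : Ω → E} (hZ : Integrable Z μ) (T : E →L[ℝ] F) :
    (fun ω => T ((μ[Z|m]) ω)) =ᵐ[μ] μ[fun ω => T (Z ω)|m] := by
  refine ae_eq_condExp_of_forall_setIntegral_eq hm (T.integrable_comp hZ)
    (fun s _ _ => (T.integrable_comp integrable_condExp).integrableOn)
    (fun s hs hμs => ?_) ?_
  · rw [T.integral_comp_comm (integrable_condExp.integrableOn),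
      T.integral_comp_comm (hZ.integrableOn), setIntegral_condExp hm hZ hs]
  · exact (T.continuous.comp_stronglyMeasurable stronglyMeasurable_condExp).aestronglyMeasurable

theorem condexp_jensen {Ω : Type*} {m m0 : MeasurableSpace Ω} {μ : Measure Ω}
    [IsProbabilityMeasure μ] (hm : m ≤ m0) {d : ℕ}
    {Z : Ω → EuclideanSpace ℝ (Fin d)} (hZ : Integrable Z μ)
    {c : EuclideanSpace ℝ (Fin d) → ℝ} (hconv : ConvexOn ℝ Set.univ c)
    (hcont : Continuous c) (hcZ : Integrable (fun ω => c (Z ω)) μ) :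
    ∀ᵐ ω ∂μ, c ((μ[Z|m]) ω) ≤ (μ[fun ω => c (Z ω)|m]) ω := by
  obtain ⟨D, hDcount, hDdense⟩ :=
    TopologicalSpace.exists_countable_dense (EuclideanSpace ℝ (Fin d))
  choose T hT using fun x₀ : EuclideanSpace ℝ (Fin d) => exists_supporting hconv hcont x₀
  have hae : ∀ x₀ : EuclideanSpace ℝ (Fin d),
      ∀ᵐ ω ∂μ, c x₀ + (T x₀) ((μ[Z|m]) ω - x₀) ≤ (μ[fun ω => c (Z ω)|m]) ω := by
    intro x₀
    have hTZ : Integrable (fun ω => (T x₀) (Z ω)) μ := (T x₀).integrable_comp hZ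
    have hf_int : Integrable ((fun ω => (T x₀) (Z ω)) + fun _ => c x₀ - (T x₀) x₀) μ :=
      hTZ.add (integrable_const _)
    have hle : ((fun ω => (T x₀) (Z ω)) + fun _ => c x₀ - (T x₀) x₀) ≤ᵐ[μ]
        fun ω => c (Z ω) := by
      filter_upwards with ω
      have h := hT x₀ (Z ω)
      rw [map_sub] at h
      simp only [Pi.add_apply]
      linarith
    have hmono := condExp_mono (m := m) hf_int hcZ hle
    have hadd := condExp_add hTZ (integrable_const (c x₀ - (T x₀) x₀)) (m := m)
    have hclm := condexp_clm hm hZ (T x₀)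
    rw [condExp_const hm (c x₀ - (T x₀) x₀)] at hadd
    filter_upwards [hmono, hadd, hclm] with ω h1 h2 h3
    rw [h2] at h1
    simp only [Pi.add_apply] at h1
    rw [← h3] at h1
    rw [map_sub]
    linarith
  have haeD : ∀ᵐ ω ∂μ, ∀ x₀ ∈ D,
      c x₀ + (T x₀) ((μ[Z|m]) ω - x₀) ≤ (μ[fun ω => c (Z ω)|m]) ω :=
    (ae_ball_iff hDcount).mpr fun x₀ _ => hae x₀
  filter_upwards [haeD] with ω hω
  set y := (μ[Z|m]) ω with hy
  set R := (μ[fun ω => c (Z ω)|m]) ω with hR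
  by_contra hcon
  push_neg at hcon
  set ε := (c y - R) / 2 with hε
  have hεpos : 0 < ε := by simp only [hε]; linarith
  have hLL : LocallyLipschitzOn (Set.univ : Set (EuclideanSpace ℝ (Fin d))) c :=
    hconv.locallyLipschitzOn isOpen_univ
  obtain ⟨K, t, ht, hKt⟩ := hLL (Set.mem_univ y)
  rw [nhdsWithin_univ] at ht
  obtain ⟨r, hrpos, hball⟩ := Metric.mem_nhds_iff.mp ht
  have hKball : LipschitzOnWith K c (Metric.ball y r) := hKt.mono hball
  have hKr : (0:ℝ) ≤ (K:ℝ) := K.coe_nonneg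
  set δ := min (r / 3) (ε / (2 * (K:ℝ) + 1)) with hδ
  have hδpos : 0 < δ := lt_min (by linarith) (by positivity)
  obtain ⟨x₀, hx₀ball, hx₀D⟩ := (Metric.dense_iff.mp hDdense y δ hδpos)
  have hdist : dist x₀ y < δ := Metric.mem_ball.mp hx₀ball
  have hdnn : (0:ℝ) ≤ dist x₀ y := dist_nonneg
  have hδr : δ ≤ r / 3 := min_le_left _ _
  have hδε : δ * (2 * (K:ℝ) + 1) ≤ ε := by
    have := min_le_right (r / 3) (ε / (2 * (K:ℝ) + 1))
    rw [← hδ] at this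
    calc δ * (2 * (K:ℝ) + 1) ≤ ε / (2 * (K:ℝ) + 1) * (2 * (K:ℝ) + 1) := by
          apply mul_le_mul_of_nonneg_right this (by positivity)
      _ = ε := div_mul_cancel₀ _ (by positivity)
  -- membership in the Lipschitz ball
  have hymem : y ∈ Metric.ball y r := Metric.mem_ball_self hrpos
  have hx₀mem : x₀ ∈ Metric.ball y r := by
    rw [Metric.mem_ball]; linarith
  have h2x : dist (x₀ + (x₀ - y)) y ≤ 2 * dist x₀ y := by
    rw [dist_eq_norm, dist_eq_norm]
    have harg : x₀ + (x₀ - y) - y = (x₀ - y) + (x₀ - y) := by abel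
    rw [harg]
    calc ‖(x₀ - y) + (x₀ - y)‖ ≤ ‖x₀ - y‖ + ‖x₀ - y‖ := norm_add_le _ _
      _ = 2 * ‖x₀ - y‖ := by ring
  have h2xmem : x₀ + (x₀ - y) ∈ Metric.ball y r := by
    rw [Metric.mem_ball]; linarith [h2x]
  have h2xd : dist (x₀ + (x₀ - y)) x₀ = dist x₀ y := by
    rw [dist_eq_norm, dist_eq_norm]
    congr 1
    abel
  -- Lipschitz bounds
  have hlip1 : |c x₀ - c y| ≤ (K:ℝ) * dist x₀ y := by
    have := hKball.dist_le_mul x₀ hx₀mem y hymem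
    rwa [Real.dist_eq] at this
  have hlip2 : |c (x₀ + (x₀ - y)) - c x₀| ≤ (K:ℝ) * dist x₀ y := by
    have := hKball.dist_le_mul (x₀ + (x₀ - y)) h2xmem x₀ hx₀mem
    rwa [Real.dist_eq, h2xd] at this
  -- supporting bound
  have hsup := hT x₀ (x₀ + (x₀ - y))
  have harg2 : x₀ + (x₀ - y) - x₀ = x₀ - y := by abel
  rw [harg2] at hsup
  have hTbound : (T x₀) (x₀ - y) ≤ (K:ℝ) * dist x₀ y := by
    have h := abs_le.mp hlip2
    linarith [h.2]
  have hmain := hω x₀ hx₀D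
  have hyx : y - x₀ = -(x₀ - y) := by abel
  rw [hyx, map_neg] at hmain
  have habs := abs_le.mp hlip1
  -- c y ≤ c x₀ + K d ≤ R + T(x₀-y) + K d ≤ R + 2 K d ≤ R + 2 K δ < R + ε
  have hfinal : c y ≤ R + 2 * (K:ℝ) * dist x₀ y := by linarith [habs.2]
  have hKd : 2 * (K:ℝ) * dist x₀ y ≤ 2 * (K:ℝ) * δ :=
    mul_le_mul_of_nonneg_left hdist.le (by positivity)
  have : c y ≤ R + ε := by nlinarith
  simp only [hε] at this
  linarith

/-- Discrete-time form of the paper's Corollary C.1 (SB reduces transport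
cost): for an integrable `Z` on a probability space, a convex continuous cost
`c` with `c ∘ Z` integrable, and sub-σ-algebras `G₁, …, G_N`, Jensen's
inequality and the tower property give
`∫ c((1/N)·∑ₖ E[Z|Gₖ]) dμ ≤ ∫ c(Z) dμ`. -/
theorem stmt14 {Ω : Type*} {m0 : MeasurableSpace Ω} (μ : Measure Ω)
    [IsProbabilityMeasure μ] (d : ℕ) (hd : 1 ≤ d)
    (Z : Ω → EuclideanSpace ℝ (Fin d)) (hZ : Integrable Z μ)
    (c : EuclideanSpace ℝ (Fin d) → ℝ) (hc_conv : ConvexOn ℝ Set.univ c)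
    (hc_cont : Continuous c) (hcZ : Integrable (fun ω => c (Z ω)) μ)
    (N : ℕ) (hN : 1 ≤ N) (G : Fin N → MeasurableSpace Ω) (hG : ∀ k, G k ≤ m0)
    (hint : Integrable (fun ω => c ((N : ℝ)⁻¹ • ∑ k, (μ[Z | G k]) ω)) μ) :
    ∫ ω, c ((N : ℝ)⁻¹ • ∑ k, (μ[Z | G k]) ω) ∂μ ≤ ∫ ω, c (Z ω) ∂μ := by
  have hNne : (N : ℝ) ≠ 0 := Nat.cast_ne_zero.mpr (by omega)
  have hNpos : (0:ℝ) < (N : ℝ)⁻¹ := by positivity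
  have hjensen : ∀ᵐ ω ∂μ, c ((N : ℝ)⁻¹ • ∑ k, (μ[Z | G k]) ω)
      ≤ (N : ℝ)⁻¹ * ∑ k, (μ[fun ω => c (Z ω) | G k]) ω := by
    have hall := ae_all_iff.mpr
      (fun k : Fin N => condexp_jensen (hG k) hZ hc_conv hc_cont hcZ)
    filter_upwards [hall] with ω hω
    have hw : ∑ _k : Fin N, (N : ℝ)⁻¹ = 1 := by
      rw [Finset.sum_const, Finset.card_univ, Fintype.card_fin, nsmul_eq_mul]
      field_simp
    have hfin := hc_conv.map_sum_le (t := Finset.univ) (w := fun _ => (N:ℝ)⁻¹)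
      (p := fun k => (μ[Z | G k]) ω) (fun _ _ => hNpos.le) hw (fun _ _ => Set.mem_univ _)
    rw [← Finset.smul_sum] at hfin
    refine hfin.trans ?_
    rw [Finset.mul_sum]
    exact Finset.sum_le_sum fun k _ => mul_le_mul_of_nonneg_left (hω k) hNpos.le
  have hRint : Integrable (fun ω => (N : ℝ)⁻¹ * ∑ k, (μ[fun ω => c (Z ω) | G k]) ω) μ := by
    refine Integrable.const_mul ?_ _
    exact integrable_finset_sum _ fun k _ => integrable_condExp
  refine (integral_mono_ae hint hRint hjensen).trans ?_
  rw [integral_const_mul, integral_finset_sum _ fun k _ => integrable_condExp]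
  have hck : ∀ k : Fin N, ∫ ω, (μ[fun ω => c (Z ω) | G k]) ω ∂μ = ∫ ω, c (Z ω) ∂μ :=
    fun k => integral_condExp (hG k)
  rw [Finset.sum_congr rfl fun k _ => hck k, Finset.sum_const, Finset.card_univ,
    Fintype.card_fin, nsmul_eq_mul, ← mul_assoc, inv_mul_cancel₀ hNne, one_mul]
end
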